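/- The graph G(Γ) satisfies ν_ac(G(Γ)) = n+m. -/

import Mathlib

open SimpleGraph

/-- The subgraph of `G` consisting of those pairs in `s` that are actually edges of `G`. -/
def pairsSubgraph {V : Type*} (G : SimpleGraph V) (s : Set (V × V)) : G.Subgraph where
  verts := {v | ∃ a b, (G.Adj a b ∧ ((a, b) ∈ s ∨ (b, a) ∈ s)) ∧ (v = a ∨ v = b)}
  Adj a b := G.Adj a b ∧ ((a, b) ∈ s ∨ (b, a) ∈ s)
  adj_sub h := h.1
  edge_vert h := ⟨_, _, h, Or.inl rfl⟩
  symm := ⟨fun _ _ h => ⟨h.1.symm, h.2.symm⟩⟩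

/-- `M` is an induced matching in `G`: it is a matching, and `G(M)`, the subgraph of `G`
induced by the set `V(M)` of covered vertices (which is `M.verts` for a matching subgraph),
is `1`-regular, i.e. every vertex of `G(M)` has exactly one neighbour in `G(M)`. -/
def IsInducedMatching {V : Type*} (G : SimpleGraph V) (M : G.Subgraph) : Prop :=
  M.IsMatching ∧ ∀ v : M.verts, ∃! w : M.verts, (G.induce M.verts).Adj v w

/-- `M` is an acyclic matching in `G`: it is a matching and `G(M)` is a forest. -/
def IsAcyclicMatching {V : Type*} (G : SimpleGraph V) (M : G.Subgraph) : Prop :=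
  M.IsMatching ∧ (G.induce M.verts).IsAcyclic

/-- `M` is a uniquely restricted matching in `G`: it is a matching and it is the unique
perfect matching of `G(M)`, i.e. the unique matching of `G` covering exactly `M.verts`. -/
def IsURMatching {V : Type*} (G : SimpleGraph V) (M : G.Subgraph) : Prop :=
  M.IsMatching ∧ ∀ M' : G.Subgraph, M'.IsMatching → M'.verts = M.verts → M' = M

/-- The (ordinary) matching number `ν(G)`: the maximum cardinality of a matching in `G`. -/
noncomputable def nuMatch {V : Type*} (G : SimpleGraph V) : ℕ :=
  sSup {k : ℕ | ∃ M : G.Subgraph, M.IsMatching ∧ M.edgeSet.ncard = k}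

/-- The uniquely restricted matching number `ν_ur(G)`. -/
noncomputable def nuUR {V : Type*} (G : SimpleGraph V) : ℕ :=
  sSup {k : ℕ | ∃ M : G.Subgraph, IsURMatching G M ∧ M.edgeSet.ncard = k}

/-- The acyclic matching number `ν_ac(G)`. -/
noncomputable def nuAc {V : Type*} (G : SimpleGraph V) : ℕ :=
  sSup {k : ℕ | ∃ M : G.Subgraph, IsAcyclicMatching G M ∧ M.edgeSet.ncard = k}

/-- The induced (strong) matching number `ν_s(G)`. -/
noncomputable def nuS {V : Type*} (G : SimpleGraph V) : ℕ :=
  sSup {k : ℕ | ∃ M : G.Subgraph, IsInducedMatching G M ∧ M.edgeSet.ncard = k}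

/-- `cyc` is an `M`-alternating cycle in `G`: a cycle of `G` whose edges alternate between
edges of `M` and edges of `E(G) \ M`. -/
def IsAltCycle {V : Type*} (G : SimpleGraph V) (M : G.Subgraph) {v : V}
    (cyc : G.Walk v v) : Prop :=
  cyc.IsCycle ∧ cyc.toSubgraph.spanningCoe.IsAlternating M.spanningCoe

/-- Vertices of the graph `G(Γ)` for the SATISFIABILITY instance `Γ` with `n` variables and `m`
clauses: `Sum.inl (i, 0) = t_i`, `Sum.inl (i, 1) = f_i`, `Sum.inl (i, 2) = u_i` are the vertices
of the triangle `X_i`; `Sum.inr (j, none) = v_j`, and `Sum.inr (j, some l)` is the vertex of the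
clique `C_j` identified with the literal `l` (it is isolated unless `l` belongs to `c_j`, so that
the clique `C_j` effectively has `|c_j| + 1` vertices). A literal `(i, true)` is `x_i` and a
literal `(i, false)` is `¬x_i`. -/
abbrev SatV (n m : ℕ) : Type := (Fin n × Fin 3) ⊕ (Fin m × Option (Fin n × Bool))

/-- The base relation for `G(Γ)`: all edges inside each triangle `X_i`, all edges inside each
clique `C_j`, an edge from `f_i` to every vertex identified with the literal `x_i`, and an edge
from `t_i` to every vertex identified with the literal `¬x_i`. -/
def satRel {n m : ℕ} (c : Fin m → Finset (Fin n × Bool)) : SatV n m → SatV n m → Prop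
  | Sum.inl (i, k), Sum.inl (i', k') => i = i' ∧ k ≠ k'
  | Sum.inr (j, o), Sum.inr (j', o') =>
      j = j' ∧ o ≠ o' ∧ (∀ l, o = some l → l ∈ c j) ∧ (∀ l, o' = some l → l ∈ c j)
  | Sum.inl (i, k), Sum.inr (j, o) =>
      (k = 1 ∧ o = some (i, true) ∧ (i, true) ∈ c j) ∨
      (k = 0 ∧ o = some (i, false) ∧ (i, false) ∈ c j)
  | Sum.inr _, Sum.inl _ => False

/-- The graph `G(Γ)` built from the SATISFIABILITY instance `Γ` whose clauses are given by `c`. -/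
def satGraph {n m : ℕ} (c : Fin m → Finset (Fin n × Bool)) : SimpleGraph (SatV n m) :=
  SimpleGraph.fromRel (satRel c)

/-!
Upper bound: the covered vertices of one triangle `X_i` or one clique `C_j` are pairwise adjacent,
and a forest contains at most two vertices of a clique, so an acyclic matching covers at most
`2 (n + m)` vertices. Lower bound: choosing a literal `ℓ_j` of every clause, the matching
`{t_i u_i} ∪ {v_j ℓ_j}` is acyclic because in the graph it induces every vertex has at most one
neighbour of smaller or equal height, where `u_i < t_i < ℓ_j < v_j`.
-/

namespace SimpleGraph

variable {V : Type*} {G : SimpleGraph V}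

theorem isAcyclic_of_adj_le_eq {α : Type*} [LinearOrder α] (f : V → α)
    (h : ∀ ⦃u v w⦄, G.Adj u v → G.Adj u w → f v ≤ f u → f w ≤ f u → v = w) :
    G.IsAcyclic := by
  classical
  intro u c hc
  obtain ⟨v, hv, hmax⟩ := c.support.toFinset.exists_max_image f ⟨u, by simp⟩
  rw [List.mem_toFinset] at hv
  obtain ⟨x, y, hxy, hN⟩ := Set.ncard_eq_two.mp (hc.ncard_neighborSet_toSubgraph_eq_two hv)
  have hx : c.toSubgraph.Adj v x := by simp [← Subgraph.mem_neighborSet, hN]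
  have hy : c.toSubgraph.Adj v y := by simp [← Subgraph.mem_neighborSet, hN]
  have hlow : ∀ {w}, c.toSubgraph.Adj v w → f w ≤ f v := fun hw =>
    hmax _ (List.mem_toFinset.mpr ((c.mem_verts_toSubgraph).mp hw.snd_mem))
  exact hxy (h (c.toSubgraph.adj_sub hx) (c.toSubgraph.adj_sub hy) (hlow hx) (hlow hy))

theorem ncard_le_two_of_isClique {s t : Set V} (hs : (G.induce s).IsAcyclic) (hts : t ⊆ s)
    (ht : G.IsClique t) : t.ncard ≤ 2 := by
  have htop : (⊤ : SimpleGraph t).IsAcyclic :=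
    induce_eq_top.mpr ht ▸ hs.embedding (G.induceHomOfLE hts)
  by_contra! h3
  have : 3 ≤ ENat.card t := le_trans (by exact_mod_cast h3) t.ncard_le_encard
  exact absurd ((egirth_eq_top.mpr htop).symm.trans (egirth_top this)) (by simp)

theorem ncard_le_two_mul_card_of_isClique_fiber {ι : Type*} [Fintype ι] {s : Set V}
    (hs : (G.induce s).IsAcyclic) (f : V → ι) (hf : ∀ i, G.IsClique (s ∩ f ⁻¹' {i})) :
    s.ncard ≤ 2 * Fintype.card ι := by
  have hcover : s = ⋃ i ∈ Finset.univ, s ∩ f ⁻¹' {i} := by ext; simp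
  calc s.ncard ≤ ∑ i, (s ∩ f ⁻¹' {i}).ncard := by
        conv_lhs => rw [hcover]
        exact Finset.set_ncard_biUnion_le _ _
    _ ≤ ∑ _ : ι, 2 := Finset.sum_le_sum fun i _ =>
        ncard_le_two_of_isClique hs Set.inter_subset_left (hf i)
    _ = 2 * Fintype.card ι := by simp [mul_comm]

namespace Subgraph

theorem IsMatching.ncard_verts [Finite V] {M : G.Subgraph} (hM : M.IsMatching) :
    M.verts.ncard = 2 * M.edgeSet.ncard := by
  have hdisj : M.edgeSet.PairwiseDisjoint ((↑) : Sym2 V → Set V) := by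
    intro e he e' he' hne
    refine Set.disjoint_left.mpr fun v hv hv' => hne ?_
    obtain ⟨w, rfl⟩ := Sym2.mem_iff_exists.mp hv
    obtain ⟨w', rfl⟩ := Sym2.mem_iff_exists.mp hv'
    rw [hM.eq_of_adj_left (M.mem_edgeSet.mp he) (M.mem_edgeSet.mp he')]
  have hpair : ∀ e ∈ M.edgeSet, (e : Set V).ncard = 2 := by
    intro e he
    induction e using Sym2.ind with
    | _ v w => simpa using Set.ncard_pair (M.adj_sub he).ne
  rw [hM.verts_eq_biUnion_edgeSet,
    (Set.toFinite _).ncard_biUnion (fun _ _ => Set.toFinite _) hdisj,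
    finsum_mem_congr rfl hpair, ← finsum_one, mul_finsum_mem, mul_one]

end Subgraph

theorem exists_isMatching_verts_eq_range {ι : Type*} [Finite V] {a b : ι → V}
    (hab : ∀ i, G.Adj (a i) (b i)) (hinj : Function.Injective (Sum.elim a b)) :
    ∃ M : G.Subgraph, M.IsMatching ∧ M.verts = Set.range (Sum.elim a b) ∧
      M.edgeSet.ncard = Nat.card ι := by
  have hverts : (⨆ i, G.subgraphOfAdj (hab i)).verts = Set.range (Sum.elim a b) := by
    ext v; simp [exists_or, eq_comm]
  have hM : (⨆ i, G.subgraphOfAdj (hab i)).IsMatching := by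
    refine Subgraph.IsMatching.iSup (fun i => .subgraphOfAdj _) fun i j hij => ?_
    have hpair : ∀ k, ({a k, b k} : Set V) = Sum.elim a b '' {.inl k, .inr k} := by
      simp [Set.image_insert_eq]
    dsimp only
    rw [support_subgraphOfAdj, support_subgraphOfAdj, hpair, hpair,
      Set.disjoint_image_iff hinj]
    simp [Ne.symm hij]
  have : Finite ι := .of_injective _ (hinj.comp Sum.inl_injective)
  refine ⟨_, hM, hverts, ?_⟩
  have := hM.ncard_verts
  rw [hverts, Set.ncard_range_of_injective hinj, Nat.card_sum] at this
  omega

end SimpleGraph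

section SatGraph

variable {n m : ℕ} {c : Fin m → Finset (Fin n × Bool)}

def satBag : SatV n m → Fin n ⊕ Fin m := Sum.map Prod.fst Prod.fst

theorem mem_of_satGraph_adj {j : Fin m} {l : Fin n × Bool} {y : SatV n m}
    (h : (satGraph c).Adj (.inr (j, some l)) y) : l ∈ c j := by
  rcases y with ⟨i, k⟩ | ⟨j', o⟩ <;> aesop (add simp [satGraph, satRel])

theorem satGraph_adj_of_satBag_eq {x y : SatV n m} (hx : ∃ z, (satGraph c).Adj x z)
    (hy : ∃ z, (satGraph c).Adj y z) (hxy : x ≠ y) (h : satBag x = satBag y) :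
    (satGraph c).Adj x y := by
  have hx' : ∀ j l, x = .inr (j, some l) → l ∈ c j := by
    rintro j l rfl; exact mem_of_satGraph_adj hx.choose_spec
  have hy' : ∀ j l, y = .inr (j, some l) → l ∈ c j := by
    rintro j l rfl; exact mem_of_satGraph_adj hy.choose_spec
  clear hx hy
  rcases x with ⟨i, k⟩ | ⟨j, o | l⟩ <;> rcases y with ⟨i', k'⟩ | ⟨j', o' | l'⟩ <;>
    simp_all [satGraph, satRel, satBag]

theorem ncard_edgeSet_le_of_isAcyclicMatching {M : (satGraph c).Subgraph}
    (hM : IsAcyclicMatching (satGraph c) M) : M.edgeSet.ncard ≤ n + m := by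
  have hclique : ∀ b, (satGraph c).IsClique (M.verts ∩ satBag ⁻¹' {b}) := by
    rintro b x ⟨hx, hxb⟩ y ⟨hy, hyb⟩ hxy
    have hnbr : ∀ {v}, v ∈ M.verts → ∃ z, (satGraph c).Adj v z := fun hv =>
      (hM.1 hv).exists.imp fun _ => M.adj_sub
    exact satGraph_adj_of_satBag_eq (hnbr hx) (hnbr hy) hxy (hxb.trans hyb.symm)
  have := ncard_le_two_mul_card_of_isClique_fiber hM.2 satBag hclique
  rw [hM.1.ncard_verts, Fintype.card_sum, Fintype.card_fin, Fintype.card_fin] at this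
  omega

/-- With `ℓ j ∈ c j`, the edges `satLeft b — satRight ℓ b` form the matching
`{t_i u_i} ∪ {v_j ℓ_j}`. -/
def satLeft : Fin n ⊕ Fin m → SatV n m :=
  Sum.elim (fun i => .inl (i, 0)) (fun j => .inr (j, none))

def satRight (ℓ : Fin m → Fin n × Bool) : Fin n ⊕ Fin m → SatV n m :=
  Sum.elim (fun i => .inl (i, 2)) (fun j => .inr (j, some (ℓ j)))

theorem satGraph_adj_satLeft_satRight {ℓ : Fin m → Fin n × Bool} (hℓ : ∀ j, ℓ j ∈ c j)
    (b : Fin n ⊕ Fin m) : (satGraph c).Adj (satLeft b) (satRight ℓ b) := by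
  rcases b with i | j <;> simp [satGraph, satRel, satLeft, satRight, hℓ]

theorem injective_sum_elim_satLeft_satRight (ℓ : Fin m → Fin n × Bool) :
    Function.Injective (Sum.elim (satLeft (n := n) (m := m)) (satRight ℓ)) := by
  rintro ((i | j) | (i | j)) ((i' | j') | (i' | j')) h <;> simp_all [satLeft, satRight]

/-- In the graph induced by that matching, the only neighbour of a vertex `x` that is not higher
than `x` is `satParent ℓ x`; this makes the induced graph a forest. -/
def satHeight : SatV n m → ℕ
  | .inl (_, 0) => 1
  | .inl _ => 0
  | .inr (_, some _) => 2
  | .inr (_, none) => 3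

def satParent (ℓ : Fin m → Fin n × Bool) : SatV n m → SatV n m
  | .inl (i, _) => .inl (i, 2)
  | .inr (_, some (i, _)) => .inl (i, 0)
  | .inr (j, none) => .inr (j, some (ℓ j))

theorem eq_satParent_of_adj {ℓ : Fin m → Fin n × Bool} {x y : SatV n m}
    (hx : x ∈ Set.range (Sum.elim satLeft (satRight ℓ)))
    (hy : y ∈ Set.range (Sum.elim satLeft (satRight ℓ)))
    (hxy : (satGraph c).Adj x y) (hh : satHeight y ≤ satHeight x) : y = satParent ℓ x := by
  obtain ⟨(b | b) | (b | b), rfl⟩ := hx <;> obtain ⟨(b' | b') | (b' | b'), rfl⟩ := hy <;>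
    simp_all [satGraph, satRel, satHeight, satParent, satLeft, satRight] <;> grind

theorem isAcyclic_induce_range_satLeft_satRight (ℓ : Fin m → Fin n × Bool) :
    ((satGraph c).induce (Set.range (Sum.elim satLeft (satRight ℓ)))).IsAcyclic :=
  isAcyclic_of_adj_le_eq (satHeight ∘ Subtype.val) fun u v w huv huw hv hw =>
    Subtype.ext <|
      (eq_satParent_of_adj u.2 v.2 huv hv).trans (eq_satParent_of_adj u.2 w.2 huw hw).symm

end SatGraph

theorem nuAc_satGraph {n m : ℕ} (c : Fin m → Finset (Fin n × Bool))
    (hsize : ∀ j, (c j).card = 2 ∨ (c j).card = 3) :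
    nuAc (satGraph c) = n + m := by
  have hne : ∀ j, (c j).Nonempty := fun j =>
    Finset.card_pos.mp (by rcases hsize j with h | h <;> omega)
  choose ℓ hℓ using hne
  obtain ⟨M, hM, hverts, hcard⟩ := exists_isMatching_verts_eq_range
    (satGraph_adj_satLeft_satRight hℓ) (injective_sum_elim_satLeft_satRight ℓ)
  have hacyclic : IsAcyclicMatching (satGraph c) M :=
    ⟨hM, hverts ▸ isAcyclic_induce_range_satLeft_satRight ℓ⟩
  refine IsGreatest.csSup_eq ⟨⟨M, hacyclic, by simpa using hcard⟩, ?_⟩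
  rintro k ⟨M', hM', rfl⟩
  exact ncard_edgeSet_le_of_isAcyclicMatching hM'
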